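/- arXiv:2204.00576 — 5 statements merged into one kernel-verified Lean document; each statement's English description precedes it below -/
import Mathlib

section
/- Every formula of anonymity logic is closed under unions: if 𝔄 ⊨_{X_i} φ for every i in an index set I, then 𝔄 ⊨_{⋃_{i∈I} X_i} φ. -/
/- Anonymity logic is closed under unions. -/

namespace Stmt3

/-- Formulas of anonymity logic FO(Υ) over domain `A`. -/
inductive AnonForm (A : Type) where
  | lit : ((ℕ → A) → Prop) → AnonForm A
  | anon : List ℕ → List ℕ → AnonForm A
  | and : AnonForm A → AnonForm A → AnonForm A
  | or  : AnonForm A → AnonForm A → AnonForm A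
  | ex  : ℕ → AnonForm A → AnonForm A
  | all : ℕ → AnonForm A → AnonForm A

variable {A : Type}

/-- Lax team semantics for anonymity logic. The anonymity atom `x̄ Υ ȳ`
holds in `X` iff for all `s ∈ X` there is `s' ∈ X` agreeing with `s` on `x̄`
and differing on `ȳ`. -/
def tsat : AnonForm A → Set (ℕ → A) → Prop
  | .lit P, X => ∀ s ∈ X, P s
  | .anon xs ys, X => ∀ s ∈ X, ∃ s' ∈ X, xs.map s' = xs.map s ∧ ys.map s' ≠ ys.map s
  | .and φ ψ, X => tsat φ X ∧ tsat ψ X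
  | .or φ ψ, X => ∃ Y Z, Y ∪ Z = X ∧ tsat φ Y ∧ tsat ψ Z
  | .ex x φ, X => ∃ F : (ℕ → A) → Set A, (∀ s ∈ X, (F s).Nonempty) ∧
      tsat φ {t | ∃ s ∈ X, ∃ a ∈ F s, t = Function.update s x a}
  | .all x φ, X => tsat φ {t | ∃ s ∈ X, ∃ a : A, t = Function.update s x a}

/-- Every formula of anonymity logic is closed under unions: if
`𝔄 ⊨_{X i} φ` for every `i` in an index set `I`, then `𝔄 ⊨_{⋃ i, X i} φ`. -/
theorem union_closure {I : Type} (φ : AnonForm A)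
    (X : I → Set (ℕ → A)) (hsat : ∀ i, tsat φ (X i)) :
    tsat φ (⋃ i, X i) := by
  induction φ generalizing X with
  | lit P =>
    intro s hs
    obtain ⟨i, hi⟩ := Set.mem_iUnion.1 hs
    exact hsat i s hi
  | anon xs ys =>
    intro s hs
    obtain ⟨i, hi⟩ := Set.mem_iUnion.1 hs
    obtain ⟨s', hs', h1, h2⟩ := hsat i s hi
    exact ⟨s', Set.mem_iUnion.2 ⟨i, hs'⟩, h1, h2⟩
  | and φ ψ ihφ ihψ =>
    exact ⟨ihφ X (fun i => (hsat i).1), ihψ X (fun i => (hsat i).2)⟩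
  | or φ ψ ihφ ihψ =>
    choose Y Z hYZ hY hZ using hsat
    refine ⟨⋃ i, Y i, ⋃ i, Z i, ?_, ihφ Y hY, ihψ Z hZ⟩
    rw [← Set.iUnion_union_distrib]
    exact Set.iUnion_congr hYZ
  | ex x φ ih =>
    choose F hF hφ using hsat
    refine ⟨fun s => ⋃ i, ⋃ (_ : s ∈ X i), F i s, ?_, ?_⟩
    · intro s hs
      obtain ⟨i, hi⟩ := Set.mem_iUnion.1 hs
      obtain ⟨a, ha⟩ := hF i s hi
      exact ⟨a, Set.mem_iUnion.2 ⟨i, Set.mem_iUnion.2 ⟨hi, ha⟩⟩⟩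
    · have h := ih (fun i => {t | ∃ s ∈ X i, ∃ a ∈ F i s, t = Function.update s x a}) hφ
      have hset : {t | ∃ s ∈ ⋃ i, X i, ∃ a ∈ ⋃ i, ⋃ (_ : s ∈ X i), F i s,
          t = Function.update s x a}
          = ⋃ i, {t | ∃ s ∈ X i, ∃ a ∈ F i s, t = Function.update s x a} := by
        ext t
        constructor
        · rintro ⟨s, hs, a, ha, rfl⟩
          obtain ⟨i, hi⟩ := Set.mem_iUnion.1 ha
          obtain ⟨hsi, hai⟩ := Set.mem_iUnion.1 hi
          exact Set.mem_iUnion.2 ⟨i, s, hsi, a, hai, rfl⟩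
        · intro ht
          obtain ⟨i, s, hs, a, ha, rfl⟩ := Set.mem_iUnion.1 ht
          exact ⟨s, Set.mem_iUnion.2 ⟨i, hs⟩, a,
            Set.mem_iUnion.2 ⟨i, Set.mem_iUnion.2 ⟨hs, ha⟩⟩, rfl⟩
      rw [hset]; exact h
  | all x φ ih =>
    have h := ih (fun i => {t | ∃ s ∈ X i, ∃ a : A, t = Function.update s x a}) hsat
    have hset : {t | ∃ s ∈ ⋃ i, X i, ∃ a : A, t = Function.update s x a}
        = ⋃ i, {t | ∃ s ∈ X i, ∃ a : A, t = Function.update s x a} := by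
      ext t
      constructor
      · rintro ⟨s, hs, a, rfl⟩
        obtain ⟨i, hi⟩ := Set.mem_iUnion.1 hs
        exact Set.mem_iUnion.2 ⟨i, s, hi, a, rfl⟩
      · intro ht
        obtain ⟨i, s, hs, a, rfl⟩ := Set.mem_iUnion.1 ht
        exact ⟨s, Set.mem_iUnion.2 ⟨i, hs⟩, a, rfl⟩
    show tsat φ _
    rw [hset]; exact h

end Stmt3
end

section
/- For downward closed and local formulas φ and ψ, the block disjunction is definable: X ⊨ φ ∨^b_x ψ if and only if X ⊨ ∃u ∃v ∃w ( dep(x,u) ∧ dep(x,v) ∧ dep(x,w) ∧ (u ≠ v ∨ φ) ∧ (u ≠ w ∨ ψ) ∧ (u = v ∨ u = w) ), where u, v, w are fresh variables. -/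
/- Definability of block disjunction for downward closed, local formulas. -/

namespace Stmt5

abbrev Team (A : Type) := Set (ℕ → A)

variable {A : Type}

/-- Two assignments agree on a set of variables. -/
def agreeOn (V : Set ℕ) (s t : ℕ → A) : Prop := ∀ n ∈ V, s n = t n

/-- Two teams have the same restriction to the variables in `V`. -/
def sameRestriction (V : Set ℕ) (X Y : Team A) : Prop :=
  (∀ s ∈ X, ∃ t ∈ Y, agreeOn V s t) ∧ (∀ t ∈ Y, ∃ s ∈ X, agreeOn V s t)

/-- A team property is local with free variables among `V` if its truth only
depends on the restriction of the team to `V`. -/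
def IsLocal (P : Team A → Prop) (V : Set ℕ) : Prop :=
  ∀ X Y : Team A, sameRestriction V X Y → (P X ↔ P Y)

/-- Downward closure: satisfaction is preserved by subteams. -/
def DownwardClosed (P : Team A → Prop) : Prop :=
  ∀ X Y : Team A, Y ⊆ X → P X → P Y

/-- `Y` is an `x`-block of `X`. -/
def IsBlock (X Y : Team A) (x : ℕ) : Prop :=
  Y ⊆ X ∧ ∀ s ∈ Y, ∀ s' ∈ X, s x = s' x → s' ∈ Y

/-- Flat satisfaction of a first-order formula (given by an assignment
predicate) by a team. -/
def flat (p : (ℕ → A) → Prop) (X : Team A) : Prop := ∀ s ∈ X, p s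

/-- Lax team disjunction. -/
def laxOr (P Q : Team A → Prop) (X : Team A) : Prop :=
  ∃ Y Z, Y ∪ Z = X ∧ P Y ∧ Q Z

/-- Lax existential quantifier. -/
def laxEx (x : ℕ) (P : Team A → Prop) (X : Team A) : Prop :=
  ∃ F : (ℕ → A) → Set A, (∀ s ∈ X, (F s).Nonempty) ∧
    P {t | ∃ s ∈ X, ∃ a ∈ F s, t = Function.update s x a}

/-- The dependence atom `dep(x̄, v)`. -/
def depAtom (xs : List ℕ) (v : ℕ) (X : Team A) : Prop :=
  ∀ s ∈ X, ∀ s' ∈ X, xs.map s = xs.map s' → s v = s' v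

/-- Block disjunction `φ ∨^b_x ψ`: the team splits into two `x`-blocks
satisfying `φ` and `ψ` respectively. -/
def blockOr (P Q : Team A → Prop) (x : ℕ) (X : Team A) : Prop :=
  ∃ Y Z, Y ∪ Z = X ∧ P Y ∧ Q Z ∧ IsBlock X Y x ∧ IsBlock X Z x

lemma laxEx_single (x : ℕ) (f : (ℕ → A) → A) {P : Team A → Prop} {X : Team A}
    (h : P ((fun s => Function.update s x (f s)) '' X)) : laxEx x P X := by
  refine ⟨fun s => {f s}, fun s _ => ⟨f s, rfl⟩, ?_⟩
  have he : {t | ∃ s ∈ X, ∃ a ∈ ({f s} : Set A), t = Function.update s x a}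
      = (fun s => Function.update s x (f s)) '' X := by
    ext t
    constructor
    · rintro ⟨s, hs, c, hc, rfl⟩
      rcases hc with rfl
      exact ⟨s, hs, rfl⟩
    · rintro ⟨s, hs, rfl⟩
      exact ⟨s, hs, f s, rfl, rfl⟩
  rw [he]; exact h

lemma laxEx_elim {x : ℕ} {P : Team A → Prop} {X : Team A} (h : laxEx x P X) :
    ∃ E : Team A, P E ∧ (∀ s ∈ X, ∃ t ∈ E, ∀ n, n ≠ x → t n = s n) ∧
      (∀ t ∈ E, ∃ s ∈ X, ∀ n, n ≠ x → t n = s n) := by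
  obtain ⟨F, hF, hP⟩ := h
  refine ⟨_, hP, ?_, ?_⟩
  · intro s hs
    obtain ⟨c, hc⟩ := hF s hs
    exact ⟨Function.update s x c, ⟨s, hs, c, hc, rfl⟩,
      fun n hn => Function.update_of_ne hn _ _⟩
  · rintro t ⟨s, hs, c, hc, rfl⟩
    exact ⟨s, hs, fun n hn => Function.update_of_ne hn _ _⟩


open Classical in
lemma forward_main {P Q : Team A → Prop} {VP VQ : Set ℕ} {x u v w : ℕ} {a b : A}
    (hab : a ≠ b)
    (hPl : IsLocal P VP) (hQl : IsLocal Q VQ)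
    (hu : u ∉ VP ∪ VQ) (hv : v ∉ VP ∪ VQ) (hw : w ∉ VP ∪ VQ)
    (hxu : x ≠ u) (hxv : x ≠ v) (hxw : x ≠ w)
    {X Y Z : Team A} (hYZ : Y ∪ Z = X) (hPY : P Y) (hQZ : Q Z)
    (hYb : IsBlock X Y x) (hZb : IsBlock X Z x)
    (E : Team A)
    (hval : ∀ t ∈ E, ∃ s ∈ X, (∀ n, n ≠ u → n ≠ v → n ≠ w → t n = s n) ∧
      t u = a ∧ t v = (if ∃ s' ∈ Y, s' x = s x then a else b) ∧
      t w = (if ∃ s' ∈ Z, s' x = s x then a else b))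
    (hfull : ∀ s ∈ X, ∃ t ∈ E, ∀ n, n ≠ u → n ≠ v → n ≠ w → t n = s n) :
    depAtom [x] u E ∧ depAtom [x] v E ∧ depAtom [x] w E ∧
    laxOr (flat fun s => s u ≠ s v) P E ∧
    laxOr (flat fun s => s u ≠ s w) Q E ∧
    laxOr (flat fun s => s u = s v) (flat fun s => s u = s w) E := by
  have hval' : ∀ t ∈ E, t u = a ∧ t v = (if ∃ s' ∈ Y, s' x = t x then a else b) ∧
      t w = (if ∃ s' ∈ Z, s' x = t x then a else b) := by
    intro t ht
    obtain ⟨s, hs, hag, h1, h2, h3⟩ := hval t ht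
    have hsx : s x = t x := (hag x hxu hxv hxw).symm
    rw [hsx] at h2 h3
    exact ⟨h1, h2, h3⟩
  have hnuP : ∀ n ∈ VP, n ≠ u := fun n hn h => hu (Set.mem_union_left _ (h ▸ hn))
  have hnvP : ∀ n ∈ VP, n ≠ v := fun n hn h => hv (Set.mem_union_left _ (h ▸ hn))
  have hnwP : ∀ n ∈ VP, n ≠ w := fun n hn h => hw (Set.mem_union_left _ (h ▸ hn))
  have hnuQ : ∀ n ∈ VQ, n ≠ u := fun n hn h => hu (Set.mem_union_right _ (h ▸ hn))
  have hnvQ : ∀ n ∈ VQ, n ≠ v := fun n hn h => hv (Set.mem_union_right _ (h ▸ hn))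
  have hnwQ : ∀ n ∈ VQ, n ≠ w := fun n hn h => hw (Set.mem_union_right _ (h ▸ hn))
  refine ⟨?_, ?_, ?_, ?_, ?_, ?_⟩
  · intro t ht t' ht' _
    rw [(hval' t ht).1, (hval' t' ht').1]
  · intro t ht t' ht' h
    have hx : t x = t' x := by simpa using h
    rw [(hval' t ht).2.1, (hval' t' ht').2.1, hx]
  · intro t ht t' ht' h
    have hx : t x = t' x := by simpa using h
    rw [(hval' t ht).2.2, (hval' t' ht').2.2, hx]
  · refine ⟨{t ∈ E | ¬ ∃ s' ∈ Y, s' x = t x}, {t ∈ E | ∃ s' ∈ Y, s' x = t x},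
      ?_, ?_, ?_⟩
    · ext t; simp only [Set.mem_union, Set.mem_setOf_eq]; tauto
    · rintro t ⟨htE, hn⟩
      obtain ⟨h1, h2, _⟩ := hval' t htE
      rw [h1, h2, if_neg hn]
      exact hab
    · refine (hPl Y _ ⟨?_, ?_⟩).mp hPY
      · intro s hsY
        have hsX := hYb.1 hsY
        obtain ⟨t, htE, hag⟩ := hfull s hsX
        have htx : t x = s x := hag x hxu hxv hxw
        exact ⟨t, ⟨htE, s, hsY, htx.symm⟩,
          fun n hn => (hag n (hnuP n hn) (hnvP n hn) (hnwP n hn)).symm⟩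
      · rintro t ⟨htE, s₀, hs₀Y, hs₀x⟩
        obtain ⟨s, hsX, hag, -, -, -⟩ := hval t htE
        have hsx : s x = t x := (hag x hxu hxv hxw).symm
        have hsY : s ∈ Y := hYb.2 s₀ hs₀Y s hsX (by rw [hs₀x, hsx])
        exact ⟨s, hsY, fun n hn => (hag n (hnuP n hn) (hnvP n hn) (hnwP n hn)).symm⟩
  · refine ⟨{t ∈ E | ¬ ∃ s' ∈ Z, s' x = t x}, {t ∈ E | ∃ s' ∈ Z, s' x = t x},
      ?_, ?_, ?_⟩
    · ext t; simp only [Set.mem_union, Set.mem_setOf_eq]; tauto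
    · rintro t ⟨htE, hn⟩
      obtain ⟨h1, -, h3⟩ := hval' t htE
      rw [h1, h3, if_neg hn]
      exact hab
    · refine (hQl Z _ ⟨?_, ?_⟩).mp hQZ
      · intro s hsZ
        have hsX := hZb.1 hsZ
        obtain ⟨t, htE, hag⟩ := hfull s hsX
        have htx : t x = s x := hag x hxu hxv hxw
        exact ⟨t, ⟨htE, s, hsZ, htx.symm⟩,
          fun n hn => (hag n (hnuQ n hn) (hnvQ n hn) (hnwQ n hn)).symm⟩
      · rintro t ⟨htE, s₀, hs₀Z, hs₀x⟩
        obtain ⟨s, hsX, hag, -, -, -⟩ := hval t htE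
        have hsx : s x = t x := (hag x hxu hxv hxw).symm
        have hsZ : s ∈ Z := hZb.2 s₀ hs₀Z s hsX (by rw [hs₀x, hsx])
        exact ⟨s, hsZ, fun n hn => (hag n (hnuQ n hn) (hnvQ n hn) (hnwQ n hn)).symm⟩
  · refine ⟨{t ∈ E | t u = t v}, {t ∈ E | t u = t w}, ?_,
      fun t ht => ht.2, fun t ht => ht.2⟩
    ext t
    simp only [Set.mem_union, Set.mem_setOf_eq]
    constructor
    · rintro (⟨ht, -⟩ | ⟨ht, -⟩) <;> exact ht
    · intro ht
      obtain ⟨s, hsX, hag, h1, h2, h3⟩ := hval t ht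
      have hsYZ : s ∈ Y ∪ Z := by rw [hYZ]; exact hsX
      rcases hsYZ with hsY | hsZ
      · exact Or.inl ⟨ht, by rw [h1, h2, if_pos ⟨s, hsY, rfl⟩]⟩
      · exact Or.inr ⟨ht, by rw [h1, h3, if_pos ⟨s, hsZ, rfl⟩]⟩

lemma backward_core {P Q : Team A → Prop} {VP VQ : Set ℕ} {x u v w : ℕ}
    (hP : DownwardClosed P) (hQ : DownwardClosed Q)
    (hPl : IsLocal P VP) (hQl : IsLocal Q VQ)
    (hu : u ∉ VP ∪ VQ) (hv : v ∉ VP ∪ VQ) (hw : w ∉ VP ∪ VQ)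
    (hxu : x ≠ u) (hxv : x ≠ v) (hxw : x ≠ w)
    {X : Team A} (E : Team A)
    (hfull : ∀ s ∈ X, ∃ t ∈ E, ∀ n, n ≠ u → n ≠ v → n ≠ w → t n = s n)
    (hrep : ∀ t ∈ E, ∃ s ∈ X, ∀ n, n ≠ u → n ≠ v → n ≠ w → t n = s n)
    (hdu : depAtom [x] u E) (hdv : depAtom [x] v E) (hdw : depAtom [x] w E)
    (hor1 : laxOr (flat fun s => s u ≠ s v) P E)
    (hor2 : laxOr (flat fun s => s u ≠ s w) Q E)
    (hor3 : laxOr (flat fun s => s u = s v) (flat fun s => s u = s w) E) :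
    blockOr P Q x X := by
  have hnuP : ∀ n ∈ VP, n ≠ u := fun n hn h => hu (Set.mem_union_left _ (h ▸ hn))
  have hnvP : ∀ n ∈ VP, n ≠ v := fun n hn h => hv (Set.mem_union_left _ (h ▸ hn))
  have hnwP : ∀ n ∈ VP, n ≠ w := fun n hn h => hw (Set.mem_union_left _ (h ▸ hn))
  have hnuQ : ∀ n ∈ VQ, n ≠ u := fun n hn h => hu (Set.mem_union_right _ (h ▸ hn))
  have hnvQ : ∀ n ∈ VQ, n ≠ v := fun n hn h => hv (Set.mem_union_right _ (h ▸ hn))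
  have hnwQ : ∀ n ∈ VQ, n ≠ w := fun n hn h => hw (Set.mem_union_right _ (h ▸ hn))
  obtain ⟨C1, D1, hCD1, hC1, hD1⟩ := hor1
  obtain ⟨C2, D2, hCD2, hC2, hD2⟩ := hor2
  obtain ⟨C3, D3, hCD3, hC3, hD3⟩ := hor3
  set Y : Team A := {s | s ∈ X ∧ ∃ t ∈ E, t x = s x ∧ t u = t v} with hYdef
  set Z : Team A := {s | s ∈ X ∧ ∃ t ∈ E, t x = s x ∧ t u = t w} with hZdef
  have hYX : Y ⊆ X := fun s hs => hs.1
  have hZX : Z ⊆ X := fun s hs => hs.1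
  refine ⟨Y, Z, ?_, ?_, ?_, ⟨hYX, ?_⟩, ⟨hZX, ?_⟩⟩
  · apply Set.Subset.antisymm (Set.union_subset hYX hZX)
    intro s hs
    obtain ⟨t, htE, hag⟩ := hfull s hs
    have htx : t x = s x := hag x hxu hxv hxw
    have htCD : t ∈ C3 ∪ D3 := by rw [hCD3]; exact htE
    rcases htCD with htC | htD
    · exact Or.inl ⟨hs, t, htE, htx, hC3 t htC⟩
    · exact Or.inr ⟨hs, t, htE, htx, hD3 t htD⟩
  · -- P Y
    have hPD : P {t | t ∈ D1 ∧ ∃ s ∈ Y, ∀ n, n ≠ u → n ≠ v → n ≠ w → t n = s n} :=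
      hP D1 _ (fun t ht => ht.1) hD1
    refine (hPl Y _ ⟨?_, ?_⟩).mpr hPD
    · intro s hsY
      obtain ⟨hsX, t', ht'E, ht'x, ht'uv⟩ := hsY
      obtain ⟨t, htE, hag⟩ := hfull s hsX
      have htx : t x = s x := hag x hxu hxv hxw
      have hxeq : ([x].map t : List A) = [x].map t' := by simp [htx, ht'x]
      have htu : t u = t' u := hdu t htE t' ht'E hxeq
      have htv : t v = t' v := hdv t htE t' ht'E hxeq
      have htuv : t u = t v := by rw [htu, htv, ht'uv]
      have htD1 : t ∈ D1 := by
        have : t ∈ C1 ∪ D1 := by rw [hCD1]; exact htE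
        rcases this with htC | htD
        · exact absurd htuv (hC1 t htC)
        · exact htD
      exact ⟨t, ⟨htD1, s, ⟨hsX, t', ht'E, ht'x, ht'uv⟩, fun n h1 h2 h3 => hag n h1 h2 h3⟩,
        fun n hn => (hag n (hnuP n hn) (hnvP n hn) (hnwP n hn)).symm⟩
    · rintro t ⟨htD1, s, hsY, hag⟩
      exact ⟨s, hsY, fun n hn => (hag n (hnuP n hn) (hnvP n hn) (hnwP n hn)).symm⟩
  · -- Q Z
    have hQD : Q {t | t ∈ D2 ∧ ∃ s ∈ Z, ∀ n, n ≠ u → n ≠ v → n ≠ w → t n = s n} :=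
      hQ D2 _ (fun t ht => ht.1) hD2
    refine (hQl Z _ ⟨?_, ?_⟩).mpr hQD
    · intro s hsZ
      obtain ⟨hsX, t', ht'E, ht'x, ht'uw⟩ := hsZ
      obtain ⟨t, htE, hag⟩ := hfull s hsX
      have htx : t x = s x := hag x hxu hxv hxw
      have hxeq : ([x].map t : List A) = [x].map t' := by simp [htx, ht'x]
      have htu : t u = t' u := hdu t htE t' ht'E hxeq
      have htw : t w = t' w := hdw t htE t' ht'E hxeq
      have htuw : t u = t w := by rw [htu, htw, ht'uw]
      have htD2 : t ∈ D2 := by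
        have : t ∈ C2 ∪ D2 := by rw [hCD2]; exact htE
        rcases this with htC | htD
        · exact absurd htuw (hC2 t htC)
        · exact htD
      exact ⟨t, ⟨htD2, s, ⟨hsX, t', ht'E, ht'x, ht'uw⟩, fun n h1 h2 h3 => hag n h1 h2 h3⟩,
        fun n hn => (hag n (hnuQ n hn) (hnvQ n hn) (hnwQ n hn)).symm⟩
    · rintro t ⟨htD2, s, hsZ, hag⟩
      exact ⟨s, hsZ, fun n hn => (hag n (hnuQ n hn) (hnvQ n hn) (hnwQ n hn)).symm⟩
  · rintro s ⟨hsX, t, htE, htx, htuv⟩ s' hs'X hxx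
    exact ⟨hs'X, t, htE, htx.trans hxx, htuv⟩
  · rintro s ⟨hsX, t, htE, htx, htuw⟩ s' hs'X hxx
    exact ⟨hs'X, t, htE, htx.trans hxx, htuw⟩

/-- For downward closed and local formulas `φ`, `ψ` (over a structure with at
least two elements), `X ⊨ φ ∨^b_x ψ` iff
`X ⊨ ∃u∃v∃w (dep(x,u) ∧ dep(x,v) ∧ dep(x,w) ∧ (u≠v ∨ φ) ∧ (u≠w ∨ ψ) ∧ (u=v ∨ u=w))`,
with `u, v, w` fresh variables. -/
theorem blockOr_definable
    (P Q : Team A → Prop) (VP VQ : Set ℕ) (x u v w : ℕ)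
    (htwo : ∃ a b : A, a ≠ b)
    (hP : DownwardClosed P) (hQ : DownwardClosed Q)
    (hPl : IsLocal P VP) (hQl : IsLocal Q VQ)
    (hu : u ∉ VP ∪ VQ) (hv : v ∉ VP ∪ VQ) (hw : w ∉ VP ∪ VQ)
    (hux : u ≠ x) (hvx : v ≠ x) (hwx : w ≠ x)
    (huv : u ≠ v) (huw : u ≠ w) (hvw : v ≠ w)
    (X : Team A) (hX : X.Finite) :
    blockOr P Q x X ↔
      laxEx u (laxEx v (laxEx w (fun X' =>
        depAtom [x] u X' ∧ depAtom [x] v X' ∧ depAtom [x] w X' ∧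
        laxOr (flat fun s => s u ≠ s v) P X' ∧
        laxOr (flat fun s => s u ≠ s w) Q X' ∧
        laxOr (flat fun s => s u = s v) (flat fun s => s u = s w) X'))) X := by
  classical
  obtain ⟨a, b, hab⟩ := htwo
  have hxu : x ≠ u := Ne.symm hux
  have hxv : x ≠ v := Ne.symm hvx
  have hxw : x ≠ w := Ne.symm hwx
  constructor
  · rintro ⟨Y, Z, hYZ, hPY, hQZ, hYb, hZb⟩
    apply laxEx_single u (fun _ => a)
    apply laxEx_single v (fun t => if ∃ s' ∈ Y, s' x = t x then a else b)
    apply laxEx_single w (fun t => if ∃ s' ∈ Z, s' x = t x then a else b)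
    simp only [Set.image_image, Function.update_of_ne hxv, Function.update_of_ne hxu]
    refine forward_main hab hPl hQl hu hv hw hxu hxv hxw hYZ hPY hQZ hYb hZb _ ?_ ?_
    · rintro t ⟨s, hs, rfl⟩
      refine ⟨s, hs, ?_, ?_, ?_, ?_⟩
      · intro n h1 h2 h3
        simp only [Function.update_of_ne h3, Function.update_of_ne h2,
          Function.update_of_ne h1]
      · simp only [Function.update_of_ne huw, Function.update_of_ne huv,
          Function.update_self]
      · simp only [Function.update_of_ne hvw, Function.update_self]
      · simp only [Function.update_self]
    · intro s hs
      exact ⟨_, ⟨s, hs, rfl⟩, fun n h1 h2 h3 => by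
        simp only [Function.update_of_ne h3, Function.update_of_ne h2,
          Function.update_of_ne h1]⟩
  · intro h
    obtain ⟨E₁, h₁, full₁, rep₁⟩ := laxEx_elim h
    obtain ⟨E₂, h₂, full₂, rep₂⟩ := laxEx_elim h₁
    obtain ⟨E₃, h₃, full₃, rep₃⟩ := laxEx_elim h₂
    obtain ⟨hdu, hdv, hdw, hor1, hor2, hor3⟩ := h₃
    refine backward_core hP hQ hPl hQl hu hv hw hxu hxv hxw E₃ ?_ ?_ hdu hdv hdw hor1 hor2 hor3
    · intro s hs
      obtain ⟨t₁, ht₁, ag₁⟩ := full₁ s hs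
      obtain ⟨t₂, ht₂, ag₂⟩ := full₂ t₁ ht₁
      obtain ⟨t₃, ht₃, ag₃⟩ := full₃ t₂ ht₂
      exact ⟨t₃, ht₃, fun n h1 h2 h3 => by rw [ag₃ n h3, ag₂ n h2, ag₁ n h1]⟩
    · intro t ht
      obtain ⟨t₂, ht₂, ag₃⟩ := rep₃ t ht
      obtain ⟨t₁, ht₁, ag₂⟩ := rep₂ t₂ ht₂
      obtain ⟨s, hs, ag₁⟩ := rep₁ t₁ ht₁
      exact ⟨s, hs, fun n h1 h2 h3 => by rw [ag₃ n h3, ag₂ n h2, ag₁ n h1]⟩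


end Stmt5
end

section
/- Block disjunction preserves downward closure: if φ and ψ are downward closed formulas, then φ ∨^b_x ψ is downward closed, i.e., X ⊨ φ ∨^b_x ψ and X' ⊆ X imply X' ⊨ φ ∨^b_x ψ, provided X' is considered with the x-blocks taken relative to X'. -/
/- Block disjunction preserves downward closure. -/

namespace Stmt6

abbrev Team (A : Type) := Set (ℕ → A)

variable {A : Type}

/-- Downward closure: satisfaction is preserved by subteams. -/
def DownwardClosed (P : Team A → Prop) : Prop :=
  ∀ X Y : Team A, Y ⊆ X → P X → P Y

/-- `Y` is an `x`-block relative to `X`. -/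
def IsBlock (X Y : Team A) (x : ℕ) : Prop :=
  Y ⊆ X ∧ ∀ s ∈ Y, ∀ s' ∈ X, s x = s' x → s' ∈ Y

/-- Block disjunction `φ ∨^b_x ψ`: `X = Y ∪ Z` with `Y ⊨ φ`, `Z ⊨ ψ` and
both `Y`, `Z` are `x`-blocks relative to `X`. -/
def blockOr (P Q : Team A → Prop) (x : ℕ) (X : Team A) : Prop :=
  ∃ Y Z, Y ∪ Z = X ∧ P Y ∧ Q Z ∧ IsBlock X Y x ∧ IsBlock X Z x

/-- If `φ` and `ψ` are downward closed then so is `φ ∨^b_x ψ`: if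
`X ⊨ φ ∨^b_x ψ` and `X' ⊆ X` then `X' ⊨ φ ∨^b_x ψ`, with the `x`-blocks
taken relative to `X'`. -/
theorem blockOr_downward_closed
    (P Q : Team A → Prop) (x : ℕ)
    (hP : DownwardClosed P) (hQ : DownwardClosed Q)
    (X X' : Team A) (hsat : blockOr P Q x X) (hsub : X' ⊆ X) :
    blockOr P Q x X' := by
  obtain ⟨Y, Z, hYZ, hPY, hQZ, ⟨hYsub, hYblk⟩, ⟨hZsub, hZblk⟩⟩ := hsat
  refine ⟨Y ∩ X', Z ∩ X', ?_, hP Y _ Set.inter_subset_left hPY,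
    hQ Z _ Set.inter_subset_left hQZ,
    ⟨Set.inter_subset_right, ?_⟩, ⟨Set.inter_subset_right, ?_⟩⟩
  · ext s; constructor
    · rintro (⟨_, h⟩ | ⟨_, h⟩) <;> exact h
    · intro hs
      have := hsub hs; rw [← hYZ] at this
      rcases this with h | h
      · exact Or.inl ⟨h, hs⟩
      · exact Or.inr ⟨h, hs⟩
  · rintro s ⟨hsY, _⟩ s' hs' hx
    exact ⟨hYblk s hsY s' (hsub hs') hx, hs'⟩
  · rintro s ⟨hsZ, _⟩ s' hs' hx
    exact ⟨hZblk s hsZ s' (hsub hs') hx, hs'⟩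

end Stmt6
end

section
/- Locality of dependence logic: for every formula φ of FO(dep) (lax semantics), structure 𝔄, and team X with Fr(φ) ⊆ Dom(X), we have 𝔄 ⊨_X φ if and only if 𝔄 ⊨_{X↾Fr(φ)} φ, where X↾V denotes the team of restrictions of the assignments in X to the variable set V. -/
/- Locality of dependence logic (lax semantics). -/

namespace Stmt18

open Classical

/-- Formulas of dependence logic FO(dep) over domain `A`: literals are given
by a predicate on value tuples together with the list of variables it is
applied to, so that their free variables are syntactically determined. -/
inductive DepForm (A : Type) where
  | lit : (List A → Prop) → List ℕ → DepForm A
  | dep : List ℕ → ℕ → DepForm A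
  | and : DepForm A → DepForm A → DepForm A
  | or  : DepForm A → DepForm A → DepForm A
  | ex  : ℕ → DepForm A → DepForm A
  | all : ℕ → DepForm A → DepForm A

variable {A : Type}

/-- Lax team semantics for dependence logic. -/
def tsat : DepForm A → Set (ℕ → A) → Prop
  | .lit P xs, X => ∀ s ∈ X, P (xs.map s)
  | .dep xs v, X => ∀ s ∈ X, ∀ s' ∈ X, xs.map s = xs.map s' → s v = s' v
  | .and φ ψ, X => tsat φ X ∧ tsat ψ X
  | .or φ ψ, X => ∃ Y Z, Y ∪ Z = X ∧ tsat φ Y ∧ tsat ψ Z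
  | .ex x φ, X => ∃ F : (ℕ → A) → Set A, (∀ s ∈ X, (F s).Nonempty) ∧
      tsat φ {t | ∃ s ∈ X, ∃ a ∈ F s, t = Function.update s x a}
  | .all x φ, X => tsat φ {t | ∃ s ∈ X, ∃ a : A, t = Function.update s x a}

/-- Free variables of a formula; variables occurring in dependence atoms
count as free. -/
def Fr : DepForm A → Set ℕ
  | .lit _ xs => {n | n ∈ xs}
  | .dep xs v => {n | n ∈ xs} ∪ {v}
  | .and φ ψ => Fr φ ∪ Fr ψ
  | .or φ ψ => Fr φ ∪ Fr ψ
  | .ex x φ => Fr φ \ {x}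
  | .all x φ => Fr φ \ {x}

/-- `X↾V`: the team of restrictions of the assignments of `X` to `V`
(variables outside `V` are reset to a default value). -/
noncomputable def restrictTeam [Inhabited A] (V : Set ℕ) (X : Set (ℕ → A)) :
    Set (ℕ → A) :=
  (fun s => fun n => if n ∈ V then s n else default) '' X

/-- Restriction of a single assignment. -/
noncomputable def res [Inhabited A] (V : Set ℕ) (s : ℕ → A) : ℕ → A :=
  fun n => if n ∈ V then s n else default

lemma res_eq_iff [Inhabited A] {V : Set ℕ} {s t : ℕ → A} :
    res V s = res V t ↔ ∀ n ∈ V, s n = t n := by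
  constructor
  · intro h n hn
    have := congrFun h n
    simpa [res, hn] using this
  · intro h
    funext n
    by_cases hn : n ∈ V
    · simp [res, hn, h n hn]
    · simp [res, hn]

lemma restrictTeam_eq [Inhabited A] (V : Set ℕ) (X : Set (ℕ → A)) :
    restrictTeam V X = res V '' X := rfl

/-- Main monotonicity lemma: satisfaction only depends on the restriction
of the team to a superset of the free variables. -/
lemma tsat_mono [Inhabited A] (φ : DepForm A) : ∀ (V : Set ℕ) (X Y : Set (ℕ → A)),
    Fr φ ⊆ V → res V '' X = res V '' Y → tsat φ X → tsat φ Y := by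
  induction φ with
  | lit P xs =>
    intro V X Y hV hXY h s hs
    have hmem : res V s ∈ res V '' X := by rw [hXY]; exact ⟨s, hs, rfl⟩
    obtain ⟨t, ht, hts⟩ := hmem
    have heq : xs.map t = xs.map s := by
      apply List.map_congr_left
      intro n hn
      exact (res_eq_iff.mp hts) n (hV hn)
    have := h t ht
    rwa [heq] at this
  | dep xs v =>
    intro V X Y hV hXY h s hs s' hs' hmap
    have hvV : v ∈ V := hV (Or.inr rfl)
    have hmem : res V s ∈ res V '' X := by rw [hXY]; exact ⟨s, hs, rfl⟩
    obtain ⟨t, ht, hts⟩ := hmem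
    have hmem' : res V s' ∈ res V '' X := by rw [hXY]; exact ⟨s', hs', rfl⟩
    obtain ⟨t', ht', hts'⟩ := hmem'
    have heq : xs.map t = xs.map s := by
      apply List.map_congr_left
      intro n hn; exact (res_eq_iff.mp hts) n (hV (Or.inl hn))
    have heq' : xs.map t' = xs.map s' := by
      apply List.map_congr_left
      intro n hn; exact (res_eq_iff.mp hts') n (hV (Or.inl hn))
    have := h t ht t' ht' (by rw [heq, heq', hmap])
    calc s v = t v := ((res_eq_iff.mp hts) v hvV).symm
      _ = t' v := this
      _ = s' v := (res_eq_iff.mp hts') v hvV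
  | and φ ψ ihφ ihψ =>
    intro V X Y hV hXY h
    exact ⟨ihφ V X Y (fun n hn => hV (Or.inl hn)) hXY h.1,
           ihψ V X Y (fun n hn => hV (Or.inr hn)) hXY h.2⟩
  | or φ ψ ihφ ihψ =>
    intro V X Y hV hXY h
    obtain ⟨Y1, Z1, hYZ, h1, h2⟩ := h
    refine ⟨{s ∈ Y | res V s ∈ res V '' Y1}, {s ∈ Y | res V s ∈ res V '' Z1}, ?_, ?_, ?_⟩
    · ext s
      constructor
      · rintro (⟨hs, _⟩ | ⟨hs, _⟩) <;> exact hs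
      · intro hs
        have hmem : res V s ∈ res V '' X := by rw [hXY]; exact ⟨s, hs, rfl⟩
        rw [← hYZ, Set.image_union] at hmem
        rcases hmem with hm | hm
        · exact Or.inl ⟨hs, hm⟩
        · exact Or.inr ⟨hs, hm⟩
    · refine ihφ V Y1 _ (fun n hn => hV (Or.inl hn)) ?_ h1
      ext u
      constructor
      · rintro ⟨s, hs, rfl⟩
        have hsX : s ∈ X := by rw [← hYZ]; exact Or.inl hs
        have hmem : res V s ∈ res V '' Y := by rw [← hXY]; exact ⟨s, hsX, rfl⟩
        obtain ⟨t, ht, htt⟩ := hmem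
        refine ⟨t, ⟨ht, ?_⟩, htt⟩
        rw [htt]; exact ⟨s, hs, rfl⟩
      · rintro ⟨t, ⟨ht, htY1⟩, rfl⟩
        exact htY1
    · refine ihψ V Z1 _ (fun n hn => hV (Or.inr hn)) ?_ h2
      ext u
      constructor
      · rintro ⟨s, hs, rfl⟩
        have hsX : s ∈ X := by rw [← hYZ]; exact Or.inr hs
        have hmem : res V s ∈ res V '' Y := by rw [← hXY]; exact ⟨s, hsX, rfl⟩
        obtain ⟨t, ht, htt⟩ := hmem
        refine ⟨t, ⟨ht, ?_⟩, htt⟩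
        rw [htt]; exact ⟨s, hs, rfl⟩
      · rintro ⟨t, ⟨ht, htZ1⟩, rfl⟩
        exact htZ1
  | ex x φ ih =>
    intro V X Y hV hXY h
    obtain ⟨F, hne, hsat⟩ := h
    refine ⟨fun s => {a | ∃ s' ∈ X, res V s' = res V s ∧ a ∈ F s'}, ?_, ?_⟩
    · intro s hs
      have hmem : res V s ∈ res V '' X := by rw [hXY]; exact ⟨s, hs, rfl⟩
      obtain ⟨s', hs', h'⟩ := hmem
      obtain ⟨a, ha⟩ := hne s' hs'
      exact ⟨a, s', hs', h', ha⟩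
    · refine ih (V ∪ {x}) _ _ ?_ ?_ hsat
      · intro n hn
        by_cases hx : n = x
        · exact Or.inr hx
        · exact Or.inl (hV ⟨hn, hx⟩)
      · have key : ∀ (s s₂ : ℕ → A) (a : A), res V s₂ = res V s →
            res (V ∪ {x}) (Function.update s₂ x a) = res (V ∪ {x}) (Function.update s x a) := by
          intro s s₂ a h₂
          apply res_eq_iff.mpr
          intro n hn
          by_cases hx : n = x
          · subst hx; simp
          · have hnV : n ∈ V := hn.resolve_right hx
            simp [Function.update_of_ne hx, (res_eq_iff.mp h₂) n hnV]
        ext u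
        constructor
        · rintro ⟨t, ⟨s, hs, a, ha, rfl⟩, rfl⟩
          have hmem : res V s ∈ res V '' Y := by rw [← hXY]; exact ⟨s, hs, rfl⟩
          obtain ⟨s₂, hs₂, h₂⟩ := hmem
          exact ⟨Function.update s₂ x a, ⟨s₂, hs₂, a, ⟨s, hs, h₂.symm, ha⟩, rfl⟩,
            key s s₂ a h₂⟩
        · rintro ⟨t, ⟨s₂, hs₂, a, ⟨s, hs, h₂, ha⟩, rfl⟩, rfl⟩
          exact ⟨Function.update s x a, ⟨s, hs, a, ha, rfl⟩, (key s s₂ a h₂.symm).symm⟩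
  | all x φ ih =>
    intro V X Y hV hXY h
    refine ih (V ∪ {x}) _ _ ?_ ?_ h
    · intro n hn
      by_cases hx : n = x
      · exact Or.inr hx
      · exact Or.inl (hV ⟨hn, hx⟩)
    · have key : ∀ (s s₂ : ℕ → A) (a : A), res V s₂ = res V s →
          res (V ∪ {x}) (Function.update s₂ x a) = res (V ∪ {x}) (Function.update s x a) := by
        intro s s₂ a h₂
        apply res_eq_iff.mpr
        intro n hn
        by_cases hx : n = x
        · subst hx; simp
        · have hnV : n ∈ V := hn.resolve_right hx
          simp [Function.update_of_ne hx, (res_eq_iff.mp h₂) n hnV]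
      ext u
      constructor
      · rintro ⟨t, ⟨s, hs, a, rfl⟩, rfl⟩
        have hmem : res V s ∈ res V '' Y := by rw [← hXY]; exact ⟨s, hs, rfl⟩
        obtain ⟨s₂, hs₂, h₂⟩ := hmem
        exact ⟨Function.update s₂ x a, ⟨s₂, hs₂, a, rfl⟩, key s s₂ a h₂⟩
      · rintro ⟨t, ⟨s₂, hs₂, a, rfl⟩, rfl⟩
        have hmem : res V s₂ ∈ res V '' X := by rw [hXY]; exact ⟨s₂, hs₂, rfl⟩
        obtain ⟨s, hs, h₂⟩ := hmem
        exact ⟨Function.update s x a, ⟨s, hs, a, rfl⟩, (key s₂ s a h₂)⟩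

lemma res_idem [Inhabited A] (V : Set ℕ) (X : Set (ℕ → A)) :
    res V '' X = res V '' (res V '' X) := by
  rw [← Set.image_comp]
  apply Set.image_congr'
  intro s
  funext n
  by_cases hn : n ∈ V <;> simp [res, hn]

/-- Locality of dependence logic: `𝔄 ⊨_X φ` iff `𝔄 ⊨_{X↾Fr(φ)} φ`. -/
theorem locality [Inhabited A] (φ : DepForm A) (X : Set (ℕ → A)) (hX : X.Finite) :
    tsat φ X ↔ tsat φ (restrictTeam (Fr φ) X) := by
  rw [restrictTeam_eq]
  constructor
  · exact tsat_mono φ (Fr φ) X _ (subset_refl _) (res_idem _ _)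
  · exact tsat_mono φ (Fr φ) _ X (subset_refl _) (res_idem _ _).symm

end Stmt18
end

section
/- A team X satisfies the disjunction dep(x̄₁,y₁) ∨ dep(x̄₂,y₂) of two dependence atoms if and only if the following 2-CNF propositional formula is satisfiable: variables Y[s], Z[s] for each s ∈ X; clauses Y[s] ∨ Z[s] for each s ∈ X; clauses ¬Y[s] ∨ ¬Y[s'] for each pair s, s' ∈ X with s(x̄₁) = s'(x̄₁) and s(y₁) ≠ s'(y₁); and clauses ¬Z[s] ∨ ¬Z[s'] for each pair s, s' ∈ X with s(x̄₂) = s'(x̄₂) and s(y₂) ≠ s'(y₂). -/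
/- A disjunction of two dependence atoms reduces to 2-CNF satisfiability. -/

namespace Stmt19

variable {A : Type}

/-- Semantics of the dependence atom `dep(x̄, y)` in a team. -/
def depAtom (xs : List ℕ) (y : ℕ) (X : Set (ℕ → A)) : Prop :=
  ∀ s ∈ X, ∀ s' ∈ X, xs.map s = xs.map s' → s y = s' y

/-- A team `X` satisfies `dep(x̄₁,y₁) ∨ dep(x̄₂,y₂)` (team disjunction) iff
the associated 2-CNF formula — with variables `Y[s]`, `Z[s]` for `s ∈ X`,
clauses `Y[s] ∨ Z[s]`, clauses `¬Y[s] ∨ ¬Y[s']` for pairs violating the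
first dependence, and `¬Z[s] ∨ ¬Z[s']` for pairs violating the second —
is satisfiable. -/
theorem dep_or_dep_iff_twoSat (X : Set (ℕ → A)) (hX : X.Finite)
    (xs₁ xs₂ : List ℕ) (y₁ y₂ : ℕ) :
    (∃ Y Z : Set (ℕ → A), Y ∪ Z = X ∧ depAtom xs₁ y₁ Y ∧ depAtom xs₂ y₂ Z) ↔
    ∃ IY IZ : (ℕ → A) → Prop,
      (∀ s ∈ X, IY s ∨ IZ s) ∧
      (∀ s ∈ X, ∀ s' ∈ X, xs₁.map s = xs₁.map s' → s y₁ ≠ s' y₁ →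
        (¬ IY s ∨ ¬ IY s')) ∧
      (∀ s ∈ X, ∀ s' ∈ X, xs₂.map s = xs₂.map s' → s y₂ ≠ s' y₂ →
        (¬ IZ s ∨ ¬ IZ s')) := by
  constructor
  · rintro ⟨Y, Z, hUZ, hY, hZ⟩
    refine ⟨fun s => s ∈ Y, fun s => s ∈ Z, ?_, ?_, ?_⟩
    · intro s hs
      rw [← hUZ] at hs
      exact hs
    · intro s hs s' hs' hmap hne
      by_contra h
      push_neg at h
      exact hne (hY s h.1 s' h.2 hmap)
    · intro s hs s' hs' hmap hne
      by_contra h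
      push_neg at h
      exact hne (hZ s h.1 s' h.2 hmap)
  · rintro ⟨IY, IZ, h1, h2, h3⟩
    refine ⟨{s ∈ X | IY s}, {s ∈ X | ¬ IY s}, ?_, ?_, ?_⟩
    · ext s
      constructor
      · rintro (⟨hs, _⟩ | ⟨hs, _⟩) <;> exact hs
      · intro hs
        by_cases h : IY s
        · exact Or.inl ⟨hs, h⟩
        · exact Or.inr ⟨hs, h⟩
    · rintro s ⟨hs, hys⟩ s' ⟨hs', hys'⟩ hmap
      by_contra hne
      rcases h2 s hs s' hs' hmap hne with h | h
      · exact h hys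
      · exact h hys'
    · rintro s ⟨hs, hys⟩ s' ⟨hs', hys'⟩ hmap
      by_contra hne
      rcases h3 s hs s' hs' hmap hne with h | h
      · exact h ((h1 s hs).resolve_left hys)
      · exact h ((h1 s' hs').resolve_left hys')

end Stmt19
end
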